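/- arXiv:2303.09318 — 6 statements merged into one kernel-verified Lean document; each statement's English description precedes it below -/
import Mathlib

section
/- Let L be a real number, and p_n, q_n integer sequences with q_n ≠ 0 such that p_n/q_n is not eventually constant. If |q_n·L − p_n| = o(gcd(p_n, q_n)) as n → ∞, then L is irrational. -/
theorem stmt_1 (L : ℝ) (p q : ℕ → ℤ) (hq : ∀ n, q n ≠ 0)
    (hnc : ∀ N : ℕ, ∃ n m : ℕ, N ≤ n ∧ N ≤ m ∧ p n * q m ≠ p m * q n)
    (hto : Filter.Tendsto
      (fun n => |(q n : ℝ) * L - (p n : ℝ)| / (Int.gcd (p n) (q n) : ℝ))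
      Filter.atTop (nhds 0)) :
    Irrational L := by
  rintro ⟨r, hr⟩
  set a : ℤ := r.num with ha
  set b : ℤ := (r.den : ℤ) with hb
  have hbpos : (0:ℤ) < b := by rw [hb]; exact_mod_cast r.pos
  have hbR : (0:ℝ) < (b:ℝ) := by exact_mod_cast hbpos
  have hL : L = (a:ℝ) / (b:ℝ) := by
    rw [← hr, Rat.cast_def]; push_cast; rfl
  have key : ∀ᶠ n in Filter.atTop,
      |(q n : ℝ) * L - (p n : ℝ)| / (Int.gcd (p n) (q n) : ℝ) < 1 / (b:ℝ) :=
    hto.eventually_lt_const (by positivity)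
  obtain ⟨N, hN⟩ := Filter.eventually_atTop.1 key
  have heq : ∀ n, N ≤ n → q n * a = p n * b := by
    intro n hn
    have hgpos : 0 < Int.gcd (p n) (q n) := Int.gcd_pos_of_ne_zero_right _ (hq n)
    have hgR : (0:ℝ) < (Int.gcd (p n) (q n) : ℝ) := by exact_mod_cast hgpos
    have h1 := hN n hn
    set k : ℤ := q n * a - p n * b with hk
    have h0 : (q n : ℝ) * L - (p n : ℝ) = (k:ℝ) / (b:ℝ) := by
      rw [hL, hk]; push_cast; field_simp
    rw [h0, abs_div, abs_of_pos hbR] at h1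
    have hlt : |(k:ℝ)| < (Int.gcd (p n) (q n) : ℝ) := by
      rw [div_div] at h1
      rw [div_lt_div_iff₀ (by positivity) hbR] at h1
      nlinarith
    have hltZ : |k| < (Int.gcd (p n) (q n) : ℤ) := by exact_mod_cast hlt
    have hdvd : (Int.gcd (p n) (q n) : ℤ) ∣ k := by
      exact dvd_sub (Dvd.dvd.mul_right (Int.gcd_dvd_right (p n) (q n)) a)
        (Dvd.dvd.mul_right (Int.gcd_dvd_left (p n) (q n)) b)
    have : k = 0 := Int.eq_zero_of_abs_lt_dvd hdvd hltZ
    linarith [this]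
  obtain ⟨n, m, hn, hm, hne⟩ := hnc N
  apply hne
  have h1 := heq n hn
  have h2 := heq m hm
  have : p n * q m * b = p m * q n * b := by linear_combination q n * h2 - q m * h1
  exact mul_right_cancel₀ (ne_of_gt hbpos) this
end

section
/- Let h1, h2, f : ℕ → ℂ be functions with f(k) ≠ 0 and h2(k) ≠ 0 for all k, and define b(x) = −h1(x)·h2(x) and a(x) = (f(x−1)·h1(x) + f(x+1)·h2(x+1))/f(x). Then for all n ≥ 1, the finite continued fraction K_{i=1}^{n} b(i)/a(i) equals (f(1)·h2(1)/f(0)) · ( 1 / ( Σ_{k=0}^{n} (f(0)·f(1)/(f(k)·f(k+1))) · Π_{i=1}^{k} (h1(i)/h2(i+1)) ) − 1 ), assuming all partial denominators are nonzero. -/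
/-- Finite generalized continued fraction `K_{i=start}^{start+count-1} b i / a i`,
defined recursively with the empty continued fraction equal to `0`. -/
noncomputable def gcfK (b a : ℕ → ℂ) : ℕ → ℕ → ℂ
  | _, 0 => 0
  | s, n + 1 => b s / (a s + gcfK b a (s + 1) n)

noncomputable def Dsum (h1 h2 f : ℕ → ℂ) (s m : ℕ) : ℂ :=
  ∑ k ∈ Finset.range (m + 1),
    (f (s - 1) * f s / (f (s - 1 + k) * f (s + k))) *
      ∏ i ∈ Finset.Icc s (s - 1 + k), (h1 i / h2 (i + 1))

lemma Dsum_zero (h1 h2 f : ℕ → ℂ) (s : ℕ) (hf : ∀ k, f k ≠ 0) (hs : 1 ≤ s) :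
    Dsum h1 h2 f s 0 = 1 := by
  unfold Dsum
  rw [Finset.sum_range_one]
  simp only [Nat.add_zero]
  rw [Finset.Icc_eq_empty_of_lt (show s - 1 < s by omega), Finset.prod_empty, mul_one]
  exact div_self (mul_ne_zero (hf _) (hf _))

lemma Dsum_succ (h1 h2 f : ℕ → ℂ) (s m : ℕ) (hf : ∀ k, f k ≠ 0)
    (hh2 : ∀ k, h2 k ≠ 0) (hs : 1 ≤ s) :
    Dsum h1 h2 f s (m + 1) =
      1 + (f (s - 1) * h1 s / (f (s + 1) * h2 (s + 1))) * Dsum h1 h2 f (s + 1) m := by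
  unfold Dsum
  rw [Finset.sum_range_succ']
  have h0 : (f (s - 1) * f s / (f (s - 1 + 0) * f (s + 0))) *
      ∏ i ∈ Finset.Icc s (s - 1 + 0), (h1 i / h2 (i + 1)) = 1 := by
    simp only [Nat.add_zero]
    rw [Finset.Icc_eq_empty_of_lt (show s - 1 < s by omega), Finset.prod_empty, mul_one]
    exact div_self (mul_ne_zero (hf _) (hf _))
  rw [h0, Finset.mul_sum, add_comm]
  congr 1
  apply Finset.sum_congr rfl
  intro k _
  have e1 : s - 1 + (k + 1) = s + k := by omega
  have e2 : s + 1 - 1 = s := by omega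
  have e4 : s + 1 + k = s + (k + 1) := by omega
  rw [e1, e2, e4]
  rw [Finset.Icc_eq_cons_Ioc (show s ≤ s + k by omega), Finset.prod_cons, ← Finset.Icc_add_one_left_eq_Ioc]
  have hA := hf (s - 1)
  have hB := hf s
  have hC := hf (s + k)
  have hD := hf (s + (k + 1))
  have hF := hf (s + 1)
  have hG := hh2 (s + 1)
  set P := ∏ i ∈ Finset.Icc (s + 1) (s + k), (h1 i / h2 (i + 1)) with hP
  field_simp

lemma aux_euler (h1 h2 f b a : ℕ → ℂ) (hf : ∀ k, f k ≠ 0) (hh2 : ∀ k, h2 k ≠ 0)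
    (hb : ∀ x, b x = -(h1 x * h2 x))
    (ha : ∀ x, 1 ≤ x → a x = (f (x - 1) * h1 x + f (x + 1) * h2 (x + 1)) / f x)
    (n : ℕ)
    (hden : ∀ i, 1 ≤ i → i ≤ n → a i + gcfK b a (i + 1) (n - i) ≠ 0) :
    ∀ m s, 1 ≤ s → s + m = n + 1 →
      Dsum h1 h2 f s m ≠ 0 ∧
      gcfK b a s m = (f s * h2 s / f (s - 1)) * (1 / Dsum h1 h2 f s m - 1) := by
  intro m
  induction m with
  | zero =>
    intro s hs hsm
    rw [Dsum_zero h1 h2 f s hf hs]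
    simp [gcfK]
  | succ m ih =>
    intro s hs hsm
    obtain ⟨hE, hT⟩ := ih (s + 1) (by omega) (by omega)
    have hsd : s + 1 - 1 = s := by omega
    rw [hsd] at hT
    have hF0 := hf (s - 1)
    have hF1 := hf s
    have hF2 := hf (s + 1)
    have hG := hh2 (s + 1)
    have hH2 := hh2 s
    set E := Dsum h1 h2 f (s + 1) m with hEdef
    set F0 := f (s - 1) with hF0d
    set F1 := f s with hF1d
    set F2 := f (s + 1) with hF2d
    set G := h2 (s + 1) with hGd
    have key : a s + gcfK b a (s + 1) m =
        (F0 * h1 s * E + F2 * G) / (F1 * E) := by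
      rw [ha s hs, hT, ← hF0d, ← hF1d, ← hF2d, ← hGd]
      field_simp
      ring
    have hden' : a s + gcfK b a (s + 1) m ≠ 0 := by
      have h := hden s hs (by omega)
      have hns : n - s = m := by omega
      rwa [hns] at h
    have hN : F0 * h1 s * E + F2 * G ≠ 0 := by
      intro h
      exact hden' (by rw [key, h, zero_div])
    have hD : Dsum h1 h2 f s (m + 1) =
        (F0 * h1 s * E + F2 * G) / (F2 * G) := by
      rw [Dsum_succ h1 h2 f s m hf hh2 hs, ← hEdef, ← hF0d, ← hF2d, ← hGd]
      field_simp
      ring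
    refine ⟨by rw [hD]; exact div_ne_zero hN (mul_ne_zero hF2 hG), ?_⟩
    show b s / (a s + gcfK b a (s + 1) m) = _
    rw [key, hb s, hD]
    have hN' : h1 s * F0 * E + F2 * G ≠ 0 := by rwa [mul_comm (h1 s)]
    field_simp
    ring

theorem stmt_2 (h1 h2 f b a : ℕ → ℂ)
    (hf : ∀ k, f k ≠ 0) (hh2 : ∀ k, h2 k ≠ 0)
    (hb : ∀ x, b x = -(h1 x * h2 x))
    (ha : ∀ x, 1 ≤ x → a x = (f (x - 1) * h1 x + f (x + 1) * h2 (x + 1)) / f x)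
    (n : ℕ) (hn : 1 ≤ n)
    (hden : ∀ i, 1 ≤ i → i ≤ n → a i + gcfK b a (i + 1) (n - i) ≠ 0)
    (hsum : (∑ k ∈ Finset.range (n + 1),
        (f 0 * f 1 / (f k * f (k + 1))) * ∏ i ∈ Finset.Icc 1 k, (h1 i / h2 (i + 1))) ≠ 0) :
    gcfK b a 1 n =
      (f 1 * h2 1 / f 0) *
        (1 / (∑ k ∈ Finset.range (n + 1),
            (f 0 * f 1 / (f k * f (k + 1))) * ∏ i ∈ Finset.Icc 1 k, (h1 i / h2 (i + 1))) - 1) := by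
  obtain ⟨-, h⟩ := aux_euler h1 h2 f b a hf hh2 hb ha n hden n 1 le_rfl (by omega)
  have hDs : Dsum h1 h2 f 1 n = ∑ k ∈ Finset.range (n + 1),
      (f 0 * f 1 / (f k * f (k + 1))) * ∏ i ∈ Finset.Icc 1 k, (h1 i / h2 (i + 1)) := by
    unfold Dsum
    apply Finset.sum_congr rfl
    intro k _
    norm_num [Nat.add_comm 1 k]
  rw [h, hDs]
end

section
/- Let a_n, b_n, p_n, q_n be integer sequences satisfying the continued fraction recurrence (p_{n+1} = a_n p_n + b_n p_{n-1}, q_{n+1} = a_n q_n + b_n q_{n-1}, p_0=1, p_1=0, q_0=0, q_1=1) with all q_n ≠ 0 for n ≥ 1 and all b_n ≠ 0. If p_n/q_n → L and |q_n L − p_n| = o(gcd(p_n, q_n)), then L is irrational. -/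
theorem stmt_6 (L : ℝ) (a b p q : ℕ → ℤ)
    (hp0 : p 0 = 1) (hp1 : p 1 = 0) (hq0 : q 0 = 0) (hq1 : q 1 = 1)
    (hp : ∀ n, 1 ≤ n → p (n + 1) = a n * p n + b n * p (n - 1))
    (hq : ∀ n, 1 ≤ n → q (n + 1) = a n * q n + b n * q (n - 1))
    (hqne : ∀ n, 1 ≤ n → q n ≠ 0)
    (hbne : ∀ n, b n ≠ 0)
    (hlim : Filter.Tendsto (fun n => (p n : ℝ) / (q n : ℝ)) Filter.atTop (nhds L))
    (ho : Filter.Tendsto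
      (fun n => |(q n : ℝ) * L - (p n : ℝ)| / (Int.gcd (p n) (q n) : ℝ))
      Filter.atTop (nhds 0)) :
    Irrational L := by
  rintro ⟨r, rfl⟩
  have hd0 : (0 : ℤ) < (r.den : ℤ) := by exact_mod_cast r.pos
  have hdR : (0 : ℝ) < (r.den : ℝ) := by exact_mod_cast r.pos
  -- determinant nonvanishing
  have hD : ∀ n, p (n+1) * q n - p n * q (n+1) ≠ 0 := by
    intro n
    induction n with
    | zero => simp [hp0, hp1, hq0, hq1]
    | succ k ih =>
      have hpk := hp (k+1) (by omega)
      have hqk := hq (k+1) (by omega)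
      simp only [Nat.add_sub_cancel] at hpk hqk
      have heq : p (k+1+1) * q (k+1) - p (k+1) * q (k+1+1)
          = -b (k+1) * (p (k+1) * q k - p k * q (k+1)) := by
        rw [hpk, hqk]; ring
      rw [heq]
      exact mul_ne_zero (neg_ne_zero.2 (hbne _)) ih
  -- eventually q n * r = p n
  have hev : ∀ᶠ n in Filter.atTop, (q n : ℝ) * (r : ℝ) = (p n : ℝ) := by
    have h1 : ∀ᶠ n in Filter.atTop,
        |(q n : ℝ) * (r : ℝ) - (p n : ℝ)| / (Int.gcd (p n) (q n) : ℝ)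
          < 1 / (r.den : ℝ) :=
      ho.eventually (gt_mem_nhds (by positivity))
    filter_upwards [h1, Filter.eventually_ge_atTop 1] with n hn hn1
    have hq0' : q n ≠ 0 := hqne n hn1
    have hg : 0 < Int.gcd (p n) (q n) := Int.gcd_pos_of_ne_zero_right _ hq0'
    have hgR : (0 : ℝ) < (Int.gcd (p n) (q n) : ℝ) := by exact_mod_cast hg
    have hm : ((Int.gcd (p n) (q n) : ℤ)) ∣ q n * r.num - p n * (r.den : ℤ) :=
      dvd_sub ((Int.gcd_dvd_right _ _).mul_right _) ((Int.gcd_dvd_left _ _).mul_right _)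
    have hrcast : (r : ℝ) = (r.num : ℝ) / (r.den : ℝ) := by
      rw [Rat.cast_def]
    have habs : |(q n : ℝ) * (r : ℝ) - (p n : ℝ)|
        = |((q n * r.num - p n * (r.den : ℤ) : ℤ) : ℝ)| / (r.den : ℝ) := by
      have heq2 : (q n : ℝ) * (r : ℝ) - (p n : ℝ)
          = ((q n * r.num - p n * (r.den : ℤ) : ℤ) : ℝ) / (r.den : ℝ) := by
        rw [hrcast]; push_cast; field_simp
      rw [heq2, abs_div, abs_of_pos hdR]
    rw [habs] at hn
    have hlt : |((q n * r.num - p n * (r.den : ℤ) : ℤ) : ℝ)|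
        < (Int.gcd (p n) (q n) : ℝ) := by
      rw [div_div, div_lt_div_iff₀ (by positivity) hdR] at hn
      nlinarith [abs_nonneg ((q n * r.num - p n * (r.den : ℤ) : ℤ) : ℝ)]
    have hlt' : |q n * r.num - p n * (r.den : ℤ)| < (Int.gcd (p n) (q n) : ℤ) := by
      exact_mod_cast hlt
    have hz : q n * r.num - p n * (r.den : ℤ) = 0 :=
      Int.eq_zero_of_abs_lt_dvd hm hlt'
    have hz' : (q n : ℝ) * (r.num : ℝ) = (p n : ℝ) * (r.den : ℝ) := by
      have : ((q n * r.num : ℤ) : ℝ) = ((p n * (r.den : ℤ) : ℤ) : ℝ) := by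
        exact_mod_cast sub_eq_zero.mp hz
      push_cast at this
      linarith
    rw [hrcast]
    field_simp
    linarith
  obtain ⟨N, hN⟩ := Filter.eventually_atTop.mp hev
  have hA := hN N le_rfl
  have hB := hN (N+1) (by omega)
  apply hD N
  have : ((p (N+1) * q N - p N * q (N+1) : ℤ) : ℝ) = 0 := by
    push_cast
    rw [← hA, ← hB]
    ring
  exact_mod_cast this
end

section
/- Let f, f̄, a, b be polynomials (over ℂ) in variables x, y (b in x only), with b not identically zero, and set M_X(x,y) = [[0, b(x)],[1, a(x,y)]] and M_Y(x,y) = [[f̄(x,y), b(x)],[1, f(x,y)]]. Then the conservativeness condition M_X(x,y)·M_Y(x+1,y) = M_Y(x,y)·M_X(x,y+1) for all x, y holds if and only if (i) a(x,y) = f(x,y) − f̄(x+1,y) and a(x,y+1) = f(x+1,y) − f̄(x,y), and (ii) (f·f̄)(x,y) − b(x) is independent of x, i.e. there exist polynomials b_X(x), b_Y(y) with b_X = b and (f·f̄)(x,y) = b_X(x) + b_Y(y). -/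
/-- A function `ℂ → ℂ → ℂ` is polynomial in its two variables. -/
def IsPoly2 (g : ℂ → ℂ → ℂ) : Prop :=
  ∃ P : MvPolynomial (Fin 2) ℂ, ∀ x y : ℂ, g x y = MvPolynomial.eval ![x, y] P

lemma sectionX {g : ℂ → ℂ → ℂ} (hg : IsPoly2 g) (y : ℂ) :
    ∃ Q : Polynomial ℂ, ∀ x : ℂ, g x y = Q.eval x := by
  obtain ⟨P, hP⟩ := hg
  refine ⟨MvPolynomial.eval₂ Polynomial.C (![Polynomial.X, Polynomial.C y]) P, fun x => ?_⟩
  rw [hP]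
  symm
  rw [show Polynomial.eval x (MvPolynomial.eval₂ Polynomial.C ![Polynomial.X, Polynomial.C y] P)
      = (Polynomial.evalRingHom x) (MvPolynomial.eval₂ Polynomial.C ![Polynomial.X, Polynomial.C y] P) from rfl,
    MvPolynomial.eval₂_comp_left]
  have h1 : (Polynomial.evalRingHom x).comp Polynomial.C = RingHom.id ℂ := by ext z; simp
  have h2 : (⇑(Polynomial.evalRingHom x) ∘ ![Polynomial.X, Polynomial.C y]) = ![x, y] := by
    funext i; fin_cases i <;> simp
  rw [h1, h2]; rfl

lemma zero_of_cofinite {Q : Polynomial ℂ} {S : Set ℂ} (hS : S.Finite)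
    (h : ∀ x ∉ S, Q.eval x = 0) : ∀ x, Q.eval x = 0 := by
  have hQ : Q = 0 := by
    by_contra hne
    have : {x | Q.IsRoot x}.Finite := Polynomial.finite_setOf_isRoot hne
    have : (S ∪ {x | Q.IsRoot x}).Finite := hS.union this
    have huniv : (Set.univ : Set ℂ) ⊆ S ∪ {x | Q.IsRoot x} := by
      intro x _
      by_cases hx : x ∈ S
      · exact Or.inl hx
      · exact Or.inr (h x hx)
    exact Set.infinite_univ (Set.Finite.subset this huniv)
  simp [hQ]

lemma periodic_const {Q : Polynomial ℂ} (h : ∀ x : ℂ, Q.eval (x + 1) = Q.eval x) :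
    ∀ x : ℂ, Q.eval x = Q.eval 0 := by
  have hn : ∀ n : ℕ, Q.eval (n : ℂ) = Q.eval 0 := by
    intro n; induction n with
    | zero => simp
    | succ n ih => push_cast; rw [h, ih]
  have hQ : Q - Polynomial.C (Q.eval 0) = 0 := by
    apply Polynomial.eq_zero_of_infinite_isRoot
    apply Set.Infinite.mono (s := Set.range ((↑) : ℕ → ℂ))
    · intro z hz
      obtain ⟨n, rfl⟩ := hz
      simp [Polynomial.IsRoot, hn n]
    · exact Set.infinite_range_of_injective Nat.cast_injective
  intro x
  have := congrArg (Polynomial.eval x) hQ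
  simpa [sub_eq_zero] using this


theorem stmt_8 (f fbar a : ℂ → ℂ → ℂ) (b : ℂ → ℂ)
    (hf : IsPoly2 f) (hfbar : IsPoly2 fbar) (ha : IsPoly2 a)
    (hbp : ∃ P : Polynomial ℂ, ∀ x : ℂ, b x = P.eval x)
    (hbne : ∃ x : ℂ, b x ≠ 0) :
    (∀ x y : ℂ,
        !![0, b x; 1, a x y] * !![fbar (x + 1) y, b (x + 1); 1, f (x + 1) y] =
          !![fbar x y, b x; 1, f x y] * !![0, b x; 1, a x (y + 1)]) ↔
      ((∀ x y : ℂ, a x y = f x y - fbar (x + 1) y ∧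
          a x (y + 1) = f (x + 1) y - fbar x y) ∧
        ∃ bY : ℂ → ℂ, ∀ x y : ℂ, f x y * fbar x y = b x + bY y) := by
  obtain ⟨Pb, hPb⟩ := hbp
  obtain ⟨xb, hxb⟩ := hbne
  have hPb0 : Pb ≠ 0 := fun h => hxb (by rw [hPb, h, Polynomial.eval_zero])
  have hSfin : {x : ℂ | Pb.IsRoot x}.Finite := Polynomial.finite_setOf_isRoot hPb0
  constructor
  · intro H
    -- extract entry equations
    have hent : ∀ x y : ℂ,
        (b x * f (x + 1) y = fbar x y * b x + b x * a x (y + 1)) ∧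
        (fbar (x + 1) y + a x y = f x y) ∧
        (b (x + 1) + a x y * f (x + 1) y = b x + f x y * a x (y + 1)) := by
      intro x y
      have h := H x y
      rw [Matrix.mul_fin_two, Matrix.mul_fin_two, ← Matrix.ext_iff] at h
      have h01 := h 0 1
      have h10 := h 1 0
      have h11 := h 1 1
      simp at h01 h10 h11
      exact ⟨by linear_combination h01, by linear_combination h10, by linear_combination h11⟩
    -- first condition
    have h21 : ∀ x y : ℂ, a x y = f x y - fbar (x + 1) y := by
      intro x y; have := (hent x y).2.1; linear_combination this
    -- (1,2) entry: cancel b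
    have h12 : ∀ x y : ℂ, f (x + 1) y = fbar x y + a x (y + 1) := by
      intro x y
      -- fix y, polynomial in x
      obtain ⟨Qf, hQf⟩ := sectionX hf y
      obtain ⟨Qfb, hQfb⟩ := sectionX hfbar y
      obtain ⟨Qa, hQa⟩ := sectionX ha (y + 1)
      set R : Polynomial ℂ := Qf.comp (Polynomial.X + 1) - Qfb - Qa with hR
      have hRval : ∀ x : ℂ, R.eval x = f (x + 1) y - fbar x y - a x (y + 1) := by
        intro x; simp [hR, hQf, hQfb, hQa]
      have hRzero : ∀ x : ℂ, R.eval x = 0 := by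
        apply zero_of_cofinite hSfin
        intro x hx
        have hb : b x ≠ 0 := by rw [hPb]; exact hx
        have h1 := (hent x y).1
        have hc := mul_left_cancel₀ hb (show b x * f (x + 1) y
            = b x * (fbar x y + a x (y + 1)) by linear_combination h1)
        rw [hRval]
        linear_combination hc
      have := hRzero x
      rw [hRval] at this
      linear_combination this
    refine ⟨fun x y => ⟨h21 x y, by rw [h12 x y]; ring⟩, ?_⟩
    -- second condition
    have hper : ∀ x y : ℂ, f (x + 1) y * fbar (x + 1) y - b (x + 1) = f x y * fbar x y - b x := by
      intro x y
      have h2 := (hent x y).2.2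
      have ha1 := h21 x y
      have ha2 := h12 x y
      rw [ha1] at h2
      rw [ha2] at h2
      rw [ha2]
      linear_combination -h2
    refine ⟨fun y => f 0 y * fbar 0 y - b 0, fun x y => ?_⟩
    obtain ⟨Qf, hQf⟩ := sectionX hf y
    obtain ⟨Qfb, hQfb⟩ := sectionX hfbar y
    set R : Polynomial ℂ := Qf * Qfb - Pb with hR
    have hRval : ∀ x : ℂ, R.eval x = f x y * fbar x y - b x := by
      intro x; simp [hR, hQf, hQfb, hPb]
    have hcon := periodic_const (Q := R) (fun x => by rw [hRval, hRval]; exact hper x y)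
    have := hcon x
    rw [hRval, hRval] at this
    linear_combination this
  · intro ⟨h1, bY, h2⟩
    intro x y
    rw [Matrix.mul_fin_two, Matrix.mul_fin_two]
    obtain ⟨ha1, ha2⟩ := h1 x y
    apply Matrix.ext
    intro i j
    fin_cases i <;> fin_cases j <;> simp
    · linear_combination -(b x) * ha2
    · linear_combination ha1
    · linear_combination (f (x + 1) y) * ha1 - (f x y) * ha2 + h2 x y - h2 (x + 1) y
end

section
/- With f(x,y) = x³+2x²y+2xy²+y³, f̄(x,y) = −x³+2x²y−2xy²+y³, b(x) = −x⁶, a(x,y) = x³+(1+x)³+2y(y−1)(2x+1), and the matrices M_X(x,y) = [[0,1],[b(x+1), a(x,y)]], M_Y(x,y) = [[f̄(x,y),1],[b(x), f(x,y)]], the conservativeness relation M_X(x,y)·M_Y(x+1,y) = M_Y(x,y)·M_X(x,y+1) holds identically. -/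
def zeta3f (x y : ℤ) : ℤ := x ^ 3 + 2 * x ^ 2 * y + 2 * x * y ^ 2 + y ^ 3

def zeta3fbar (x y : ℤ) : ℤ := -x ^ 3 + 2 * x ^ 2 * y - 2 * x * y ^ 2 + y ^ 3

def zeta3b (x : ℤ) : ℤ := -x ^ 6

def zeta3a (x y : ℤ) : ℤ := x ^ 3 + (1 + x) ^ 3 + 2 * y * (y - 1) * (2 * x + 1)

/-- `M_X(x,y) = [[0,1],[b(x+1), a(x,y)]]`. -/
def MX (x y : ℤ) : Matrix (Fin 2) (Fin 2) ℤ := !![0, 1; zeta3b (x + 1), zeta3a x y]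

/-- `M_Y(x,y) = [[f̄(x,y),1],[b(x), f(x,y)]]`. -/
def MY (x y : ℤ) : Matrix (Fin 2) (Fin 2) ℤ := !![zeta3fbar x y, 1; zeta3b x, zeta3f x y]

theorem stmt_11 : ∀ x y : ℤ, MX x y * MY (x + 1) y = MY x y * MX x (y + 1) := by
  intro x y
  simp only [MX, MY, zeta3f, zeta3fbar, zeta3b, zeta3a]
  ext i j
  fin_cases i <;> fin_cases j <;> simp [Matrix.mul_apply, Fin.sum_univ_succ] <;> ring
end

section
/- Let F, F̄ be monic real polynomials of degree m with F(k) ≠ 0 for k ≥ 1, having second-leading coefficients a_{m−1}, ā_{m−1} respectively with ā_{m−1} ≠ a_{m−1}. Then for every ε > 0, |Π_{k=1}^{n} F̄(k)/F(k)| = O(n^{ā_{m−1} − a_{m−1} + ε}). -/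
open Polynomial Filter

private lemma harmonic_real (n : ℕ) :
    ((harmonic n : ℚ) : ℝ) = ∑ k ∈ Finset.Icc 1 n, (k : ℝ)⁻¹ := by
  rw [harmonic_eq_sum_Icc]
  push_cast
  rfl

theorem stmt_16 (m : ℕ) (F Fbar : Polynomial ℝ)
    (hFmonic : F.Monic) (hFbarmonic : Fbar.Monic)
    (hFdeg : F.natDegree = m) (hFbardeg : Fbar.natDegree = m)
    (hFne : ∀ k : ℕ, 1 ≤ k → F.eval (k : ℝ) ≠ 0)
    (hcoeff : Fbar.coeff (m - 1) ≠ F.coeff (m - 1)) :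
    ∀ ε : ℝ, 0 < ε → ∃ C : ℝ, ∀ n : ℕ, 1 ≤ n →
      |∏ k ∈ Finset.Icc 1 n, Fbar.eval (k : ℝ) / F.eval (k : ℝ)| ≤
        C * (n : ℝ) ^ (Fbar.coeff (m - 1) - F.coeff (m - 1) + ε) := by
  intro ε hε
  set Δ : ℝ := Fbar.coeff (m - 1) - F.coeff (m - 1) with hΔdef
  set β : ℝ := Δ + ε with hβdef
  -- m ≥ 1
  have hm : 1 ≤ m := by
    rcases Nat.eq_zero_or_pos m with h | h
    · exfalso
      apply hcoeff
      have h1 : F = 1 := hFmonic.natDegree_eq_zero.mp (by rw [hFdeg, h])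
      have h2 : Fbar = 1 := hFbarmonic.natDegree_eq_zero.mp (by rw [hFbardeg, h])
      rw [h1, h2]
    · exact h
  have hF0 : F ≠ 0 := hFmonic.ne_zero
  have hFbar0 : Fbar ≠ 0 := hFbarmonic.ne_zero
  have hdegF : F.degree = (m : WithBot ℕ) := by
    rw [Polynomial.degree_eq_natDegree hF0, hFdeg]
  have hdegFbar : Fbar.degree = (m : WithBot ℕ) := by
    rw [Polynomial.degree_eq_natDegree hFbar0, hFbardeg]
  set G : Polynomial ℝ := Fbar - F with hGdef
  have hGdeg : G.degree < (m : WithBot ℕ) := by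
    rw [← hdegFbar]
    exact Polynomial.degree_sub_lt (hdegFbar.trans hdegF.symm) hFbar0
      (by rw [hFbarmonic.leadingCoeff, hFmonic.leadingCoeff])
  set P : Polynomial ℝ := X * G - C Δ * F with hPdef
  have hPdeg : P.degree < (m : WithBot ℕ) := by
    rw [Polynomial.degree_lt_iff_coeff_zero]
    intro j hj
    obtain ⟨i, rfl⟩ : ∃ i, j = i + 1 :=
      ⟨j - 1, (Nat.succ_pred_eq_of_pos (lt_of_lt_of_le hm hj)).symm⟩
    simp only [hPdef, coeff_sub, Polynomial.coeff_X_mul, coeff_C_mul]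
    rcases eq_or_lt_of_le hj with heq | hlt
    · -- i + 1 = m
      have hi : i = m - 1 := by omega
      have hGc : G.coeff i = Δ := by
        rw [hGdef, coeff_sub, hi, hΔdef]
      have hFc : F.coeff (i + 1) = 1 := by
        have := hFmonic.coeff_natDegree
        rw [hFdeg] at this
        rw [← heq]; exact this
      rw [hGc, hFc, mul_one, sub_self]
    · -- m < i + 1
      have h1 : G.coeff i = 0 := by
        apply Polynomial.coeff_eq_zero_of_degree_lt
        refine lt_of_lt_of_le hGdeg ?_
        exact_mod_cast Nat.le_of_lt_succ hlt
      have h2 : F.coeff (i + 1) = 0 := by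
        apply Polynomial.coeff_eq_zero_of_natDegree_lt
        omega
      rw [h1, h2, mul_zero, sub_self]
  -- tendsto facts
  have hT1 : Tendsto (fun x : ℝ => P.eval x / F.eval x) atTop (nhds 0) := by
    have := Polynomial.div_tendsto_zero_of_degree_lt P F (by rw [hdegF]; exact hPdeg)
    simpa using this
  have hT2 : Tendsto (fun x : ℝ => G.eval x / F.eval x) atTop (nhds 0) := by
    have := Polynomial.div_tendsto_zero_of_degree_lt G F (by rw [hdegF]; exact hGdeg)
    simpa using this
  have e1 : ∀ᶠ x : ℝ in atTop, |P.eval x / F.eval x| < ε := by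
    have := NormedAddCommGroup.tendsto_nhds_zero.mp hT1 ε hε
    simpa only [Real.norm_eq_abs] using this
  have e2 : ∀ᶠ x : ℝ in atTop, |G.eval x / F.eval x| < 1 / 2 := by
    have := NormedAddCommGroup.tendsto_nhds_zero.mp hT2 (1 / 2) (by norm_num)
    simpa only [Real.norm_eq_abs] using this
  obtain ⟨R, hR⟩ := Filter.eventually_atTop.mp (e1.and e2)
  set K : ℕ := max 1 ⌈R⌉₊ with hKdef
  have hK1 : 1 ≤ K := le_max_left _ _
  -- key pointwise bound
  have key : ∀ k : ℕ, K ≤ k →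
      |Fbar.eval (k : ℝ) / F.eval (k : ℝ)| ≤ Real.exp (β / k) := by
    intro k hk
    have hk1 : 1 ≤ k := le_trans hK1 hk
    have hkR : R ≤ (k : ℝ) := by
      have h1 : (⌈R⌉₊ : ℝ) ≤ (k : ℝ) := by
        exact_mod_cast le_trans (le_max_right 1 ⌈R⌉₊) hk
      exact le_trans (Nat.le_ceil R) h1
    obtain ⟨h1, h2⟩ := hR (k : ℝ) hkR
    have hFk := hFne k hk1
    have hkpos : (0 : ℝ) < (k : ℝ) := by exact_mod_cast hk1
    have hratio : Fbar.eval (k : ℝ) / F.eval (k : ℝ) = 1 + G.eval (k : ℝ) / F.eval (k : ℝ) := by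
      rw [hGdef, eval_sub]
      field_simp
      ring
    have hGF : G.eval (k : ℝ) / F.eval (k : ℝ)
        = (Δ + P.eval (k : ℝ) / F.eval (k : ℝ)) / (k : ℝ) := by
      rw [hPdef]
      simp only [eval_sub, eval_mul, eval_X, eval_C]
      field_simp
      ring
    have habs : |G.eval (k : ℝ) / F.eval (k : ℝ)| ≤ 1 / 2 := le_of_lt h2
    have habs' := abs_le.mp habs
    have hpos : 0 ≤ 1 + G.eval (k : ℝ) / F.eval (k : ℝ) := by linarith [habs'.1]
    rw [hratio, abs_of_nonneg hpos]
    have hnum : Δ + P.eval (k : ℝ) / F.eval (k : ℝ) ≤ β := by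
      rw [hβdef]
      linarith [(abs_le.mp (le_of_lt h1)).2]
    have hle : G.eval (k : ℝ) / F.eval (k : ℝ) ≤ β / (k : ℝ) := by
      rw [hGF]
      exact div_le_div_of_nonneg_right hnum hkpos.le
    calc 1 + G.eval (k : ℝ) / F.eval (k : ℝ)
        ≤ Real.exp (G.eval (k : ℝ) / F.eval (k : ℝ)) := by
          linarith [Real.add_one_le_exp (G.eval (k : ℝ) / F.eval (k : ℝ))]
      _ ≤ Real.exp (β / k) := Real.exp_le_exp.mpr hle
  -- tail product bound
  have hprod_tail : ∀ n : ℕ, K ≤ n →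
      ∏ k ∈ Finset.Icc K n, |Fbar.eval (k : ℝ) / F.eval (k : ℝ)|
        ≤ Real.exp (β * ∑ k ∈ Finset.Icc K n, (k : ℝ)⁻¹) := by
    intro n hn
    calc ∏ k ∈ Finset.Icc K n, |Fbar.eval (k : ℝ) / F.eval (k : ℝ)|
        ≤ ∏ k ∈ Finset.Icc K n, Real.exp (β / k) := by
          apply Finset.prod_le_prod (fun k _ => abs_nonneg _)
          intro k hk
          exact key k (Finset.mem_Icc.mp hk).1
      _ = Real.exp (∑ k ∈ Finset.Icc K n, β / k) := (Real.exp_sum _ _).symm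
      _ = Real.exp (β * ∑ k ∈ Finset.Icc K n, (k : ℝ)⁻¹) := by
          rw [Finset.mul_sum]
          congr 1
  -- harmonic sum identities
  have hsum_split : ∀ n : ℕ, K ≤ n →
      ∑ k ∈ Finset.Icc K n, (k : ℝ)⁻¹
        = ((harmonic n : ℚ) : ℝ) - ((harmonic (K - 1) : ℚ) : ℝ) := by
    intro n hn
    rw [harmonic_real, harmonic_real]
    have h1 : Finset.Icc 1 (K - 1) = Finset.Ioc 0 (K - 1) := by
      rw [← Finset.Icc_add_one_left_eq_Ioc]; rfl
    have h2 : Finset.Icc K n = Finset.Ioc (K - 1) n := by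
      rw [← Finset.Icc_add_one_left_eq_Ioc]
      congr 1
      omega
    have h3 : Finset.Icc 1 n = Finset.Ioc 0 n := by
      rw [← Finset.Icc_add_one_left_eq_Ioc]; rfl
    rw [h1, h2, h3, eq_sub_iff_add_eq, add_comm]
    exact Finset.sum_Ioc_consecutive _ (by omega) (by omega)
  set c : ℝ := ((harmonic (K - 1) : ℚ) : ℝ) with hcdef
  set C₂ : ℝ := Real.exp β + Real.exp (-(β * c)) with hC₂def
  -- bound exp(β * S) by C₂ * n ^ β
  have hexp_bound : ∀ n : ℕ, K ≤ n →
      Real.exp (β * (((harmonic n : ℚ) : ℝ) - c)) ≤ C₂ * (n : ℝ) ^ β := by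
    intro n hn
    have hn1 : 1 ≤ n := le_trans hK1 hn
    have hnpos : (0 : ℝ) < n := by exact_mod_cast hn1
    have hrpow : (n : ℝ) ^ β = Real.exp (Real.log n * β) := Real.rpow_def_of_pos hnpos β
    rcases le_or_gt 0 β with hβ | hβ
    · have hupper : ((harmonic n : ℚ) : ℝ) ≤ 1 + Real.log n := harmonic_le_one_add_log n
      have hc0 : 0 ≤ c := by
        rw [hcdef, harmonic_real]
        positivity
      have hmul : β * (((harmonic n : ℚ) : ℝ) - c) ≤ β * (1 + Real.log n) := by
        apply mul_le_mul_of_nonneg_left _ hβ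
        linarith
      calc Real.exp (β * (((harmonic n : ℚ) : ℝ) - c)) ≤ Real.exp (β * (1 + Real.log n)) :=
            Real.exp_le_exp.mpr hmul
        _ = Real.exp β * (n : ℝ) ^ β := by
            rw [hrpow, ← Real.exp_add]; ring_nf
        _ ≤ C₂ * (n : ℝ) ^ β := by
            apply mul_le_mul_of_nonneg_right _ (Real.rpow_nonneg (le_of_lt hnpos) β)
            rw [hC₂def]
            linarith [Real.exp_pos (-(β * c))]
    · have hlower : Real.log n ≤ ((harmonic n : ℚ) : ℝ) := by
        calc Real.log n ≤ Real.log ((n : ℝ) + 1) := by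
              apply Real.log_le_log hnpos; linarith
          _ ≤ ((harmonic n : ℚ) : ℝ) := by
              have := log_add_one_le_harmonic n
              push_cast at this
              exact this
      have hmul : β * (((harmonic n : ℚ) : ℝ) - c) ≤ β * (Real.log n - c) := by
        apply mul_le_mul_of_nonpos_left _ (le_of_lt hβ)
        linarith
      calc Real.exp (β * (((harmonic n : ℚ) : ℝ) - c)) ≤ Real.exp (β * (Real.log n - c)) :=
            Real.exp_le_exp.mpr hmul
        _ = Real.exp (-(β * c)) * (n : ℝ) ^ β := by
            rw [hrpow, ← Real.exp_add]; ring_nf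
        _ ≤ C₂ * (n : ℝ) ^ β := by
            apply mul_le_mul_of_nonneg_right _ (Real.rpow_nonneg (le_of_lt hnpos) β)
            rw [hC₂def]
            linarith [Real.exp_pos β]
  -- head constant
  set A : ℝ := ∏ k ∈ Finset.Icc 1 (K - 1), |Fbar.eval (k : ℝ) / F.eval (k : ℝ)| with hAdef
  have hA0 : 0 ≤ A := Finset.prod_nonneg fun k _ => abs_nonneg _
  -- main bound for n ≥ K
  have hmain : ∀ n : ℕ, K ≤ n →
      ∏ k ∈ Finset.Icc 1 n, |Fbar.eval (k : ℝ) / F.eval (k : ℝ)|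
        ≤ (A * C₂) * (n : ℝ) ^ β := by
    intro n hn
    have hsplit : ∏ k ∈ Finset.Icc 1 n, |Fbar.eval (k : ℝ) / F.eval (k : ℝ)|
        = A * ∏ k ∈ Finset.Icc K n, |Fbar.eval (k : ℝ) / F.eval (k : ℝ)| := by
      rw [hAdef]
      have h1 : Finset.Icc 1 (K - 1) = Finset.Ioc 0 (K - 1) := by
        rw [← Finset.Icc_add_one_left_eq_Ioc]; rfl
      have h2 : Finset.Icc K n = Finset.Ioc (K - 1) n := by
        rw [← Finset.Icc_add_one_left_eq_Ioc]; congr 1; omega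
      have h3 : Finset.Icc 1 n = Finset.Ioc 0 n := by
        rw [← Finset.Icc_add_one_left_eq_Ioc]; rfl
      rw [h1, h2, h3]
      exact (Finset.prod_Ioc_consecutive _ (by omega) (by omega)).symm
    rw [hsplit, mul_assoc]
    apply mul_le_mul_of_nonneg_left _ hA0
    calc ∏ k ∈ Finset.Icc K n, |Fbar.eval (k : ℝ) / F.eval (k : ℝ)|
        ≤ Real.exp (β * ∑ k ∈ Finset.Icc K n, (k : ℝ)⁻¹) := hprod_tail n hn
      _ = Real.exp (β * (((harmonic n : ℚ) : ℝ) - c)) := by rw [hsum_split n hn]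
      _ ≤ C₂ * (n : ℝ) ^ β := hexp_bound n hn
  -- small n constant
  have hne : (Finset.Icc 1 K).Nonempty := by
    rw [Finset.nonempty_Icc]; exact hK1
  set Csmall : ℝ := (Finset.Icc 1 K).sup' hne
      (fun n => (∏ k ∈ Finset.Icc 1 n, |Fbar.eval (k : ℝ) / F.eval (k : ℝ)|) / (n : ℝ) ^ β)
    with hCsmalldef
  refine ⟨max (A * C₂) Csmall, ?_⟩
  intro n hn1
  have hnpos : (0 : ℝ) < n := by exact_mod_cast hn1
  have hrpow_pos : (0 : ℝ) < (n : ℝ) ^ β := Real.rpow_pos_of_pos hnpos β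
  rw [Finset.abs_prod]
  rcases le_or_gt K n with h | h
  · calc ∏ k ∈ Finset.Icc 1 n, |Fbar.eval (k : ℝ) / F.eval (k : ℝ)|
        ≤ (A * C₂) * (n : ℝ) ^ β := hmain n h
      _ ≤ max (A * C₂) Csmall * (n : ℝ) ^ β :=
          mul_le_mul_of_nonneg_right (le_max_left _ _) (le_of_lt hrpow_pos)
  · have hmem : n ∈ Finset.Icc 1 K := Finset.mem_Icc.mpr ⟨hn1, le_of_lt h⟩
    have hle : (∏ k ∈ Finset.Icc 1 n, |Fbar.eval (k : ℝ) / F.eval (k : ℝ)|) / (n : ℝ) ^ β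
        ≤ Csmall := by
      rw [hCsmalldef]
      exact Finset.le_sup'
        (fun n : ℕ => (∏ k ∈ Finset.Icc 1 n, |Fbar.eval (k : ℝ) / F.eval (k : ℝ)|) / (n : ℝ) ^ β)
        hmem
    calc ∏ k ∈ Finset.Icc 1 n, |Fbar.eval (k : ℝ) / F.eval (k : ℝ)|
        = ((∏ k ∈ Finset.Icc 1 n, |Fbar.eval (k : ℝ) / F.eval (k : ℝ)|) / (n : ℝ) ^ β)
            * (n : ℝ) ^ β := by
          field_simp
      _ ≤ Csmall * (n : ℝ) ^ β :=
          mul_le_mul_of_nonneg_right hle (le_of_lt hrpow_pos)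
      _ ≤ max (A * C₂) Csmall * (n : ℝ) ^ β :=
          mul_le_mul_of_nonneg_right (le_max_right _ _) (le_of_lt hrpow_pos)
end
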